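/- Convergence of simulated annealing with the Gibbs sampler: suppose Δ > 0 and T₀ > nΔ, and set β_t = ln(⌊t/n⌋ + 1)/T₀ and P^{(t)} = P_{β_t}. Then for every initial probability distribution μ₀ on Aⁿ, lim_{r→∞} ‖μ₀ P^{(0,r)} − π*‖₁ = 0, where π* is the uniform distribution on H; in particular, the probability under μ₀ P^{(0,r)} of the event {y : E(y) = min_{z∈Aⁿ} E(z)} tends to 1 as r → ∞. -/

import Mathlib

open Filter

/-- The Gibbs-sampler (heat bath) transition matrix at inverse temperature `β`
for the energy `E` on the state space `Fin n → A`: a coordinate `i` is chosen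
uniformly at random and resampled from the conditional Boltzmann distribution. -/
noncomputable def gibbs {A : Type*} [Fintype A] [DecidableEq A]
    (n : ℕ) (E : (Fin n → A) → ℝ) (β : ℝ) :
    Matrix (Fin n → A) (Fin n → A) ℝ := fun u v =>
  (∑ i : Fin n,
    if ∀ j, j ≠ i → v j = u j then
      Real.exp (-β * E v) / ∑ b : A, Real.exp (-β * E (Function.update u i b))
    else 0) / n

/-- The maximal change of the energy `E` when a single coordinate is modified. -/
noncomputable def energySpan {A : Type*} [Fintype A] [DecidableEq A]
    (n : ℕ) (E : (Fin n → A) → ℝ) : ℝ :=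
  ⨆ q : (Fin n → A) × Fin n × A × A,
    |E (Function.update q.1 q.2.1 q.2.2.1) - E (Function.update q.1 q.2.1 q.2.2.2)|

/-- The ℓ¹ distance between two vectors on a finite index set. -/
noncomputable def l1 {S : Type*} [Fintype S] (u v : S → ℝ) : ℝ :=
  ∑ k, |u k - v k|

/-- A probability distribution (row vector) on a finite state space. -/
def IsDist {S : Type*} [Fintype S] (μ : S → ℝ) : Prop :=
  (∀ k, 0 ≤ μ k) ∧ ∑ k, μ k = 1

/-- The product `P^{(n1,n2)} = P^{(n1)} P^{(n1+1)} ⋯ P^{(n2−1)}` of the transition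
matrices of a nonhomogeneous Markov chain. -/
noncomputable def Pprod {S : Type*} [Fintype S] [DecidableEq S]
    (P : ℕ → Matrix S S ℝ) (n1 n2 : ℕ) : Matrix S S ℝ :=
  ((List.range (n2 - n1)).map fun t => P (n1 + t)).prod

/-- The set `H` of global minimizers of the energy `E`. -/
noncomputable def minimizers {A : Type*} [Fintype A]
    (n : ℕ) (E : (Fin n → A) → ℝ) : Finset (Fin n → A) :=
  Finset.univ.filter fun y => ∀ z, E y ≤ E z

/-- The uniform distribution on the set of global minimizers of the energy. -/
noncomputable def uniformOnMinimizers {A : Type*} [Fintype A] [DecidableEq A]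
    (n : ℕ) (E : (Fin n → A) → ℝ) : (Fin n → A) → ℝ :=
  fun y => if y ∈ minimizers n E then 1 / ((minimizers n E).card : ℝ) else 0

/-!
Cut time into sweeps of `n` steps, during which the inverse temperature `β_k = ln (k+1) / T₀` is
constant. The Boltzmann law `π_k ∝ e^{-β_k E}` is stationary for the Gibbs sampler by detailed
balance, and in one sweep every state reaches every other with probability at least
`(e^{-β_k Δ} / (|A| n))^n`. By Doeblin's bound a sweep therefore contracts the ℓ¹ distance to `π_k`
by a factor `1 - a_k` with `a_k = (k+1)^(-nΔ/T₀) / n^n`, and `∑ a_k = ∞` because `nΔ < T₀`.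
On the other hand `‖π_k - π_{k+1}‖₁ = O((k+1)^(-1 - g/T₀))` is summable, where `g > 0` is the
energy gap above the minimum. The recursion `d_{k+1} ≤ (1 - a_k) d_k + ‖π_k - π_{k+1}‖₁`
then forces `d_k → 0`, and `π_k` tends to the uniform law on the minimizers as `β_k → ∞`.
-/

open Finset Matrix Topology

section Stochastic

variable {S : Type*} [Fintype S]

theorem l1_nonneg (μ ν : S → ℝ) : 0 ≤ l1 μ ν :=
  sum_nonneg fun _ _ => abs_nonneg _

theorem l1_triangle (μ ν ρ : S → ℝ) : l1 μ ρ ≤ l1 μ ν + l1 ν ρ := by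
  rw [l1, l1, l1, ← sum_add_distrib]
  exact sum_le_sum fun k _ => abs_sub_le _ _ _

theorem abs_sum_sub_sum_le_l1 (s : Finset S) (μ ν : S → ℝ) :
    |∑ y ∈ s, μ y - ∑ y ∈ s, ν y| ≤ l1 μ ν := by
  rw [← sum_sub_distrib]
  exact (abs_sum_le_sum_abs _ _).trans
    (sum_le_sum_of_subset_of_nonneg (subset_univ s) fun _ _ _ => abs_nonneg _)

theorem tendsto_l1_of_tendsto {ι : Type*} {l : Filter ι} {μ : ι → S → ℝ} {ν : S → ℝ}
    (h : Tendsto μ l (𝓝 ν)) : Tendsto (fun x => l1 (μ x) ν) l (𝓝 0) := by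
  have := tendsto_finsetSum univ fun y _ =>
    ((tendsto_pi_nhds.1 h y).sub_const (ν y)).abs
  simpa [l1] using this

theorem vecMul_eq_self_of_detailed_balance {M : Matrix S S ℝ} (hM : ∀ u, ∑ v, M u v = 1)
    {μ : S → ℝ} (h : ∀ u v, μ u * M u v = μ v * M v u) : μ ᵥ* M = μ := by
  ext v
  simp only [vecMul, dotProduct, h _ v, ← mul_sum, hM, mul_one]

variable [DecidableEq S]

theorem vecMul_pow_eq_self {M : Matrix S S ℝ} {μ : S → ℝ} (h : μ ᵥ* M = μ) (k : ℕ) :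
    μ ᵥ* M ^ k = μ := by
  induction k with
  | zero => rw [pow_zero, vecMul_one]
  | succ k ih => rw [pow_succ, ← vecMul_vecMul, ih, h]

theorem IsDist.vecMul {μ : S → ℝ} (hμ : IsDist μ) {M : Matrix S S ℝ}
    (hM : M ∈ rowStochastic ℝ S) : IsDist (μ ᵥ* M) := by
  refine ⟨nonneg_vecMul_of_mem_rowStochastic hM hμ.1, ?_⟩
  simpa only [dotProduct_one] using
    vecMul_dotProduct_one_eq_one_rowStochastic hM (by simpa only [dotProduct_one] using hμ.2)

/-- Doeblin's bound: since `μ - ν` has total mass zero, subtracting the constant matrix `δ`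
from `M` does not change `(μ - ν) M`, and `M - δ` is entrywise nonnegative. -/
theorem l1_vecMul_le {M : Matrix S S ℝ} (hM : M ∈ rowStochastic ℝ S) {δ : ℝ}
    (hδ : ∀ u v, δ ≤ M u v) {μ ν : S → ℝ} (hμν : ∑ k, μ k = ∑ k, ν k) :
    l1 (μ ᵥ* M) (ν ᵥ* M) ≤ (1 - Fintype.card S * δ) * l1 μ ν := by
  have hdiff : ∀ v, (μ ᵥ* M) v - (ν ᵥ* M) v = ∑ u, (μ u - ν u) * (M u v - δ) := by
    intro v
    simp only [vecMul, dotProduct, mul_sub, sub_mul, sum_sub_distrib, ← sum_mul, hμν]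
    ring
  calc l1 (μ ᵥ* M) (ν ᵥ* M) = ∑ v, |∑ u, (μ u - ν u) * (M u v - δ)| := by
        simp only [l1, hdiff]
    _ ≤ ∑ v, ∑ u, |μ u - ν u| * (M u v - δ) := by
        refine sum_le_sum fun v _ => (abs_sum_le_sum_abs _ _).trans_eq ?_
        simp only [abs_mul, abs_of_nonneg (sub_nonneg.2 (hδ _ v))]
    _ = (1 - Fintype.card S * δ) * l1 μ ν := by
        rw [sum_comm, l1, mul_sum]
        refine sum_congr rfl fun u _ => ?_
        rw [← mul_sum, sum_sub_distrib, sum_row_of_mem_rowStochastic hM, sum_const,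
          card_univ, nsmul_eq_mul, mul_comm]

theorem l1_vecMul_le_l1 {M : Matrix S S ℝ} (hM : M ∈ rowStochastic ℝ S) {μ ν : S → ℝ}
    (hμν : ∑ k, μ k = ∑ k, ν k) : l1 (μ ᵥ* M) (ν ᵥ* M) ≤ l1 μ ν := by
  simpa using l1_vecMul_le hM (fun u v => nonneg_of_mem_rowStochastic hM) hμν

end Stochastic

section Pprod

variable {S : Type*} [Fintype S] [DecidableEq S] (P : ℕ → Matrix S S ℝ)

theorem Pprod_mul {a b c : ℕ} (hab : a ≤ b) (hbc : b ≤ c) :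
    Pprod P a b * Pprod P b c = Pprod P a c := by
  obtain ⟨k, rfl⟩ := Nat.exists_eq_add_of_le hab
  obtain ⟨l, rfl⟩ := Nat.exists_eq_add_of_le hbc
  simp only [Pprod, Nat.add_sub_cancel_left, add_assoc, Nat.add_sub_add_left, List.range_add,
    List.map_append, List.prod_append, List.map_map, Function.comp_def]

theorem Pprod_eq_pow {a b : ℕ} {M : Matrix S S ℝ} (h : ∀ t, a ≤ t → t < b → P t = M) :
    Pprod P a b = M ^ (b - a) := by
  rw [Pprod, ← List.prod_replicate, ← List.length_range (n := b - a), ← List.map_const',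
    List.length_range]
  refine congrArg List.prod (List.map_congr_left fun t ht => ?_)
  exact h _ (Nat.le_add_right a t) (by have := List.mem_range.1 ht; omega)

theorem Pprod_mem_rowStochastic (hP : ∀ t, P t ∈ rowStochastic ℝ S) (a b : ℕ) :
    Pprod P a b ∈ rowStochastic ℝ S :=
  list_prod_mem fun _ hM => by
    obtain ⟨t, -, rfl⟩ := List.mem_map.1 hM
    exact hP _

end Pprod

section Recursion

variable {a ε d : ℕ → ℝ}

theorem tendsto_prod_Ico_one_sub_atTop (ha₀ : ∀ k, 0 ≤ a k) (ha₁ : ∀ k, a k ≤ 1)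
    (ha : ¬ Summable a) (m : ℕ) :
    Tendsto (fun k => ∏ j ∈ Ico m k, (1 - a j)) atTop (𝓝 0) := by
  have hsum : Tendsto (fun k => ∑ j ∈ Ico m k, a j) atTop atTop := by
    have := (not_summable_iff_tendsto_nat_atTop_of_nonneg ha₀).1 ha
    refine (tendsto_atTop_add_const_right _ (-∑ j ∈ range m, a j) this).congr' ?_
    filter_upwards [eventually_ge_atTop m] with k hk
    rw [sum_Ico_eq_sub _ hk, sub_eq_add_neg]
  refine squeeze_zero (fun k => prod_nonneg fun j _ => sub_nonneg.2 (ha₁ j)) (fun k => ?_)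
    (Real.tendsto_exp_atBot.comp (tendsto_neg_atTop_atBot.comp hsum))
  rw [Function.comp_apply, Function.comp_apply, ← sum_neg_distrib, Real.exp_sum]
  exact prod_le_prod (fun j _ => sub_nonneg.2 (ha₁ j)) fun j _ => Real.one_sub_le_exp_neg _

theorem le_prod_Ico_mul_add_sum_Ico (ha₀ : ∀ k, 0 ≤ a k) (ha₁ : ∀ k, a k ≤ 1)
    (hε : ∀ k, 0 ≤ ε k) (hrec : ∀ k, d (k + 1) ≤ (1 - a k) * d k + ε k) {m k : ℕ}
    (hmk : m ≤ k) : d k ≤ (∏ j ∈ Ico m k, (1 - a j)) * d m + ∑ j ∈ Ico m k, ε j := by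
  induction k, hmk using Nat.le_induction with
  | base => simp
  | succ k hmk ih =>
    rw [prod_Ico_succ_top hmk, sum_Ico_succ_top hmk]
    have hc : 0 ≤ 1 - a k := sub_nonneg.2 (ha₁ k)
    have htail : (1 - a k) * ∑ j ∈ Ico m k, ε j ≤ ∑ j ∈ Ico m k, ε j :=
      mul_le_of_le_one_left (sum_nonneg fun j _ => hε j) (by linarith [ha₀ k])
    nlinarith [hrec k, mul_le_mul_of_nonneg_left ih hc]

theorem tendsto_zero_of_le_one_sub_mul_add (hd : ∀ k, 0 ≤ d k) (ha₀ : ∀ k, 0 ≤ a k)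
    (ha₁ : ∀ k, a k ≤ 1) (ha : ¬ Summable a) (hε₀ : ∀ k, 0 ≤ ε k) (hε : Summable ε)
    (hrec : ∀ k, d (k + 1) ≤ (1 - a k) * d k + ε k) : Tendsto d atTop (𝓝 0) := by
  rw [Metric.tendsto_atTop]
  intro η hη
  have htail : Tendsto (fun m => ∑' j, ε j - ∑ j ∈ range m, ε j) atTop (𝓝 0) := by
    simpa using (tendsto_const_nhds (x := ∑' j, ε j)).sub hε.hasSum.tendsto_sum_nat
  obtain ⟨m, hm⟩ := (htail.eventually (gt_mem_nhds (half_pos hη))).exists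
  have hprod := ((tendsto_prod_Ico_one_sub_atTop ha₀ ha₁ ha m).mul_const (d m)).eventually
    (gt_mem_nhds (by rw [zero_mul]; exact half_pos hη : 0 * d m < η / 2))
  obtain ⟨N, hN⟩ := eventually_atTop.1 (hprod.and (eventually_ge_atTop m))
  refine ⟨N, fun k hk => ?_⟩
  obtain ⟨hk₁, hmk⟩ := hN k hk
  have hεk : ∑ j ∈ Ico m k, ε j ≤ ∑' j, ε j - ∑ j ∈ range m, ε j := by
    rw [sum_Ico_eq_sub _ hmk]
    linarith [hε.sum_le_tsum (range k) fun j _ => hε₀ j]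
  rw [Real.dist_eq, sub_zero, abs_of_nonneg (hd k)]
  linarith [le_prod_Ico_mul_add_sum_Ico ha₀ ha₁ hε₀ hrec hmk]

end Recursion

theorem IsDist.nonempty {S : Type*} [Fintype S] {μ : S → ℝ} (hμ : IsDist μ) : Nonempty S :=
  univ_nonempty_iff.1 (nonempty_of_sum_ne_zero (hμ.2 ▸ one_ne_zero))

/-- Strong ergodicity of an inhomogeneous chain: by the triangle inequality and Doeblin's bound,
`d k = ‖μ k - π k‖₁` satisfies `d (k+1) ≤ (1 - |S| δ k) d k + ‖π k - π (k+1)‖₁`. -/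
theorem tendsto_l1_stationary_of_doeblin {S : Type*} [Fintype S] [DecidableEq S]
    {Q : ℕ → Matrix S S ℝ} {δ : ℕ → ℝ} {π μ : ℕ → S → ℝ}
    (hQ : ∀ k, Q k ∈ rowStochastic ℝ S) (hδ₀ : ∀ k, 0 ≤ δ k) (hδ : ∀ k u v, δ k ≤ Q k u v)
    (hδsum : ¬ Summable δ) (hπ : ∀ k, IsDist (π k)) (hπQ : ∀ k, π k ᵥ* Q k = π k)
    (hπsum : Summable fun k => l1 (π k) (π (k + 1))) (hμ₀ : IsDist (μ 0))
    (hμ : ∀ k, μ (k + 1) = μ k ᵥ* Q k) :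
    Tendsto (fun k => l1 (μ k) (π k)) atTop (𝓝 0) := by
  have hμdist : ∀ k, IsDist (μ k) := fun k => by
    induction k with
    | zero => exact hμ₀
    | succ k ih => rw [hμ]; exact ih.vecMul (hQ k)
  have : Nonempty S := hμ₀.nonempty
  have hcard : (0 : ℝ) < Fintype.card S := by exact_mod_cast Fintype.card_pos
  have ha₁ : ∀ k, Fintype.card S * δ k ≤ 1 := fun k => by
    obtain ⟨u⟩ := this
    rw [← sum_row_of_mem_rowStochastic (hQ k) u, ← card_univ, ← nsmul_eq_mul, ← sum_const]
    exact sum_le_sum fun v _ => hδ k u v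
  refine tendsto_zero_of_le_one_sub_mul_add (fun k => l1_nonneg _ _)
    (fun k => mul_nonneg hcard.le (hδ₀ k)) ha₁
    (fun h => hδsum ((summable_mul_left_iff hcard.ne').1 h)) (fun k => l1_nonneg _ _) hπsum
    fun k => ?_
  calc l1 (μ (k + 1)) (π (k + 1)) ≤ l1 (μ k ᵥ* Q k) (π k ᵥ* Q k) + l1 (π k) (π (k + 1)) := by
        rw [← hμ, hπQ]
        exact l1_triangle _ _ _
    _ ≤ (1 - Fintype.card S * δ k) * l1 (μ k) (π k) + l1 (π k) (π (k + 1)) := by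
        gcongr
        exact l1_vecMul_le (hQ k) (hδ k) (by rw [(hμdist k).2, (hπ k).2])

section UniformOn

variable {S : Type*} [DecidableEq S]

noncomputable def uniformOn (H : Finset S) : S → ℝ :=
  fun y => if y ∈ H then 1 / (#H : ℝ) else 0

theorem sum_uniformOn {H : Finset S} (hH : H.Nonempty) : ∑ y ∈ H, uniformOn H y = 1 := by
  rw [sum_congr rfl fun y hy => show uniformOn H y = 1 / #H from if_pos hy, sum_const,
    nsmul_eq_mul, mul_one_div_cancel]
  exact_mod_cast hH.card_pos.ne'

end UniformOn

section Boltzmann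

variable {S : Type*} [Fintype S]

noncomputable def boltzmann (f : S → ℝ) (β : ℝ) : S → ℝ :=
  fun y => Real.exp (-β * f y) / ∑ z, Real.exp (-β * f z)

theorem boltzmann_isDist [Nonempty S] (f : S → ℝ) (β : ℝ) : IsDist (boltzmann f β) := by
  have hZ : 0 < ∑ z, Real.exp (-β * f z) := sum_pos (fun z _ => Real.exp_pos _) univ_nonempty
  refine ⟨fun y => div_nonneg (Real.exp_pos _).le hZ.le, ?_⟩
  simp only [boltzmann, ← sum_div, div_self hZ.ne']

theorem boltzmann_sub_const (f : S → ℝ) (c β : ℝ) :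
    boltzmann (fun z => f z - c) β = boltzmann f β := by
  have hexp : ∀ z, Real.exp (-β * (f z - c)) = Real.exp (-β * f z) * Real.exp (β * c) := by
    intro z
    rw [← Real.exp_add]
    ring_nf
  ext y
  simp only [boltzmann, hexp, ← sum_mul]
  exact mul_div_mul_right _ _ (Real.exp_pos _).ne'

section Limit

variable [DecidableEq S]

theorem tendsto_boltzmann_atTop [Nonempty S] (f : S → ℝ) :
    Tendsto (boltzmann f) atTop (𝓝 (uniformOn (univ.filter fun y => ∀ z, f y ≤ f z))) := by
  obtain ⟨y₀, hy₀⟩ := Finite.exists_min f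
  set H := univ.filter fun y => ∀ z, f y ≤ f z
  have hmem : ∀ y, y ∈ H ↔ f y - f y₀ = 0 := fun y => by
    simp only [H, mem_filter, mem_univ, true_and, sub_eq_zero]
    exact ⟨fun h => le_antisymm (h y₀) (hy₀ y), fun h z => h ▸ hy₀ z⟩
  have hweight : ∀ y, Tendsto (fun β => Real.exp (-β * (f y - f y₀))) atTop
      (𝓝 (if y ∈ H then 1 else 0)) := fun y => by
    split_ifs with hy
    · simp [(hmem y).1 hy]
    · have hpos : 0 < f y - f y₀ :=
        lt_of_le_of_ne (sub_nonneg.2 (hy₀ y)) (Ne.symm ((hmem y).not.1 hy))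
      exact Real.tendsto_exp_atBot.comp
        (tendsto_neg_atTop_atBot.atBot_mul_const hpos |>.congr fun β => by ring)
  have hZ : Tendsto (fun β => ∑ z, Real.exp (-β * (f z - f y₀))) atTop (𝓝 (#H : ℝ)) := by
    simpa [sum_boole, H] using tendsto_finsetSum univ fun z _ => hweight z
  have hH : (#H : ℝ) ≠ 0 := by
    exact_mod_cast (card_pos.2 ⟨y₀, (hmem y₀).2 (sub_self _)⟩).ne'
  rw [tendsto_pi_nhds]
  intro y
  have hlim := (hweight y).div hZ hH
  rw [ite_div, zero_div] at hlim
  refine hlim.congr fun β => ?_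
  rw [← boltzmann_sub_const f (f y₀) β]
  rfl

end Limit

theorem abs_exp_neg_sub_exp_neg_le {x y : ℝ} (hx : 0 ≤ x) (hy : 0 ≤ y) :
    |Real.exp (-x) - Real.exp (-y)| ≤ |x - y| := by
  wlog hxy : x ≤ y generalizing x y
  · rw [abs_sub_comm, abs_sub_comm x]
    exact this hy hx (le_of_not_ge hxy)
  have hfactor : Real.exp (-x) - Real.exp (-y) = Real.exp (-x) * (1 - Real.exp (-(y - x))) := by
    rw [mul_sub, mul_one, ← Real.exp_add]
    ring_nf
  have hgap : 0 ≤ 1 - Real.exp (-(y - x)) := sub_nonneg.2 (Real.exp_le_one_iff.2 (by linarith))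
  rw [hfactor, abs_sub_comm, abs_of_nonneg (sub_nonneg.2 hxy),
    abs_of_nonneg (mul_nonneg (Real.exp_pos _).le hgap)]
  calc Real.exp (-x) * (1 - Real.exp (-(y - x))) ≤ 1 * (1 - Real.exp (-(y - x))) :=
        mul_le_mul_of_nonneg_right (Real.exp_le_one_iff.2 (by linarith)) hgap
    _ ≤ y - x := by linarith [Real.one_sub_le_exp_neg (y - x)]

theorem abs_exp_mul_exp_sub_exp_mul_exp_le {a b β β' : ℝ} (ha : 0 ≤ a) (hb : 0 ≤ b)
    (hβ : 0 ≤ β) (hββ' : β ≤ β') :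
    |Real.exp (-β * a) * Real.exp (-β' * b) - Real.exp (-β' * a) * Real.exp (-β * b)|
      ≤ (β' - β) * |a - b| * Real.exp (-β * max a b) := by
  have hfactor : Real.exp (-β * a) * Real.exp (-β' * b) - Real.exp (-β' * a) * Real.exp (-β * b)
      = Real.exp (-β * (a + b)) *
        (Real.exp (-((β' - β) * b)) - Real.exp (-((β' - β) * a))) := by
    simp only [mul_sub, ← Real.exp_add]
    ring_nf
  have hlip := abs_exp_neg_sub_exp_neg_le (mul_nonneg (sub_nonneg.2 hββ') hb)
    (mul_nonneg (sub_nonneg.2 hββ') ha)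
  rw [← mul_sub, abs_mul, abs_of_nonneg (sub_nonneg.2 hββ'), abs_sub_comm b] at hlip
  have hmax : β * max a b ≤ β * (a + b) :=
    mul_le_mul_of_nonneg_left (max_le (by linarith) (by linarith)) hβ
  rw [hfactor, abs_mul, abs_of_nonneg (Real.exp_pos _).le]
  calc Real.exp (-β * (a + b)) * |Real.exp (-((β' - β) * b)) - Real.exp (-((β' - β) * a))|
      ≤ Real.exp (-β * max a b) * ((β' - β) * |a - b|) :=
        mul_le_mul (Real.exp_le_exp.2 (by linarith)) hlip (abs_nonneg _) (Real.exp_pos _).le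
    _ = (β' - β) * |a - b| * Real.exp (-β * max a b) := mul_comm _ _

/-- After cross-multiplying, the term of `(y, z)` vanishes when `f y = f z`, and otherwise one of
`f y`, `f z` is at least `g`. -/
theorem l1_boltzmann_le {f : S → ℝ} {g D : ℝ} (hg : 0 ≤ g) (hgap : ∀ z, f z = 0 ∨ g ≤ f z)
    (hD : ∀ z, f z ≤ D) {y₀ : S} (hy₀ : f y₀ = 0) {β β' : ℝ} (hβ : 0 ≤ β) (hββ' : β ≤ β') :
    l1 (boltzmann f β) (boltzmann f β')
      ≤ Fintype.card S ^ 2 * D * Real.exp (-β * g) * (β' - β) := by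
  have hf : ∀ z, 0 ≤ f z := fun z => (hgap z).elim (·.ge) (hg.trans)
  set C := (β' - β) * D * Real.exp (-β * g)
  have hZ : ∀ β, 1 ≤ ∑ z, Real.exp (-β * f z) := fun β => by
    simpa [hy₀] using single_le_sum (fun z _ => (Real.exp_pos (-β * f z)).le) (mem_univ y₀)
  have hterm : ∀ y z, |Real.exp (-β * f y) * Real.exp (-β' * f z)
      - Real.exp (-β' * f y) * Real.exp (-β * f z)| ≤ C := fun y z => by
    have hkey : |f y - f z| * Real.exp (-β * max (f y) (f z)) ≤ D * Real.exp (-β * g) := by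
      rcases eq_or_ne (f y) (f z) with h | h
      · rw [h, sub_self, abs_zero, zero_mul]
        exact mul_nonneg (hy₀ ▸ hD y₀) (Real.exp_pos _).le
      have hmax : g ≤ max (f y) (f z) := by
        rcases hgap y with hy | hy
        · rcases hgap z with hz | hz
          · exact absurd (hy.trans hz.symm) h
          · exact hz.trans (le_max_right _ _)
        · exact hy.trans (le_max_left _ _)
      refine mul_le_mul ?_ (Real.exp_le_exp.2 (by nlinarith)) (Real.exp_pos _).le
        (hy₀ ▸ hD y₀)
      rw [abs_sub_le_iff]
      constructor <;> linarith [hD y, hD z, hf y, hf z]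
    calc _ ≤ (β' - β) * |f y - f z| * Real.exp (-β * max (f y) (f z)) :=
          abs_exp_mul_exp_sub_exp_mul_exp_le (hf y) (hf z) hβ hββ'
      _ = (β' - β) * (|f y - f z| * Real.exp (-β * max (f y) (f z))) := mul_assoc _ _ _
      _ ≤ (β' - β) * (D * Real.exp (-β * g)) :=
          mul_le_mul_of_nonneg_left hkey (sub_nonneg.2 hββ')
      _ = C := (mul_assoc _ _ _).symm
  have hcoord : ∀ y, |boltzmann f β y - boltzmann f β' y| ≤ Fintype.card S * C := fun y => by
    have hden : 1 ≤ |(∑ z, Real.exp (-β * f z)) * ∑ z, Real.exp (-β' * f z)| := by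
      rw [abs_of_nonneg (by nlinarith [hZ β, hZ β'])]
      nlinarith [hZ β, hZ β']
    have hdiff : boltzmann f β y - boltzmann f β' y
        = (∑ z, (Real.exp (-β * f y) * Real.exp (-β' * f z)
            - Real.exp (-β' * f y) * Real.exp (-β * f z)))
          / ((∑ z, Real.exp (-β * f z)) * ∑ z, Real.exp (-β' * f z)) := by
      simp only [boltzmann, sum_sub_distrib, ← mul_sum]
      rw [div_sub_div _ _ (by linarith [hZ β]) (by linarith [hZ β'])]
      ring
    rw [hdiff, abs_div]
    refine (div_le_self (abs_nonneg _) hden).trans ((abs_sum_le_sum_abs _ _).trans ?_)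
    simpa using sum_le_sum fun z (_ : z ∈ univ) => hterm y z
  calc l1 (boltzmann f β) (boltzmann f β') ≤ ∑ _y : S, Fintype.card S * C :=
        sum_le_sum fun y _ => hcoord y
    _ = Fintype.card S ^ 2 * D * Real.exp (-β * g) * (β' - β) := by
        simp only [sum_const, card_univ, nsmul_eq_mul, C]
        ring

end Boltzmann

section Gibbs

variable {A : Type*} [Fintype A] [DecidableEq A] {n : ℕ} {E : (Fin n → A) → ℝ}

theorem sum_ite_forall_ne_eq_sum_update (u : Fin n → A) (i : Fin n) (F : (Fin n → A) → ℝ) :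
    ∑ v, (if ∀ j, j ≠ i → v j = u j then F v else 0) = ∑ b, F (Function.update u i b) := by
  rw [← sum_filter]
  refine Eq.trans ?_ (sum_map univ ⟨_, Function.update_injective u i⟩ F)
  congr 1
  ext v
  simp only [mem_filter, mem_univ, true_and, Finset.mem_map, Function.Embedding.coeFn_mk,
    Function.update_eq_iff, exists_eq_left]
  exact forall₂_congr fun j _ => eq_comm

theorem gibbs_mem_rowStochastic [Nonempty A] (hn : 0 < n) (β : ℝ) :
    gibbs n E β ∈ rowStochastic ℝ (Fin n → A) := by
  refine mem_rowStochastic_iff_sum.2 ⟨fun u v => ?_, fun u => ?_⟩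
  · refine div_nonneg (sum_nonneg fun i _ => ?_) n.cast_nonneg
    split_ifs
    · exact div_nonneg (Real.exp_pos _).le (sum_nonneg fun b _ => (Real.exp_pos _).le)
    · exact le_rfl
  · have hrow : ∀ i : Fin n, ∑ v : Fin n → A, (if ∀ j, j ≠ i → v j = u j then
        Real.exp (-β * E v) / ∑ b, Real.exp (-β * E (Function.update u i b)) else 0) = 1 :=
      fun i => by
        simp only [sum_ite_forall_ne_eq_sum_update]
        rw [← sum_div,
          div_self (sum_pos (fun b _ => Real.exp_pos _) univ_nonempty).ne']
    simp only [gibbs, ← sum_div]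
    rw [sum_comm, sum_congr rfl fun i _ => hrow i, sum_const, card_univ, Fintype.card_fin,
      nsmul_eq_mul, mul_one, div_self (Nat.cast_pos.2 hn).ne']

/-- Resampling coordinate `i` ignores the old value at `i`, so the conditional partition
functions of `u` and `v` agree whenever `u` and `v` differ only at `i`. -/
theorem gibbs_detailed_balance (β : ℝ) (u v : Fin n → A) :
    Real.exp (-β * E u) * gibbs n E β u v = Real.exp (-β * E v) * gibbs n E β v u := by
  simp only [gibbs, mul_div_assoc', mul_sum]
  congr 1
  refine sum_congr rfl fun i _ => ?_
  by_cases h : ∀ j, j ≠ i → v j = u j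
  · have hupdate : ∀ b, Function.update u i b = Function.update v i b := fun b => by
      ext j
      by_cases hj : j = i
      · simp [hj]
      · simp [Function.update_of_ne hj, h j hj]
    rw [if_pos h, if_pos fun j hj => (h j hj).symm]
    simp only [hupdate]
    ring
  · rw [if_neg h, if_neg fun h' => h fun j hj => (h' j hj).symm, mul_zero, mul_zero]

theorem boltzmann_vecMul_gibbs (hn : 0 < n) [Nonempty A] (β : ℝ) :
    boltzmann E β ᵥ* gibbs n E β = boltzmann E β := by
  refine vecMul_eq_self_of_detailed_balance
    (sum_row_of_mem_rowStochastic (gibbs_mem_rowStochastic hn β)) fun u v => ?_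
  simp only [boltzmann, div_mul_eq_mul_div, gibbs_detailed_balance β u v]

theorem abs_sub_le_energySpan (u : Fin n → A) (i : Fin n) (a b : A) :
    |E (Function.update u i a) - E (Function.update u i b)| ≤ energySpan n E :=
  le_ciSup (f := fun q : (Fin n → A) × Fin n × A × A =>
      |E (Function.update q.1 q.2.1 q.2.2.1) - E (Function.update q.1 q.2.1 q.2.2.2)|)
    (Set.finite_range _).bddAbove ⟨u, i, a, b⟩

theorem energySpan_nonneg : 0 ≤ energySpan n E :=
  Real.iSup_nonneg fun _ => abs_nonneg _

/-- Coordinate `i` is chosen with probability `1/n`, and each value at `i` is within `Δ` in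
energy of every other. -/
theorem le_gibbs_update {β : ℝ} (hβ : 0 ≤ β) (u : Fin n → A) (i : Fin n) (a : A) :
    Real.exp (-β * energySpan n E) / (Fintype.card A * n)
      ≤ gibbs n E β u (Function.update u i a) := by
  set v := Function.update u i a
  set Z := ∑ b, Real.exp (-β * E (Function.update u i b))
  have : Nonempty A := ⟨a⟩
  have hZ : Z ≤ ∑ _b : A, Real.exp (-β * E v) * Real.exp (β * energySpan n E) :=
    sum_le_sum fun b _ => by
      rw [← Real.exp_add]
      exact Real.exp_le_exp.2 (by nlinarith [(abs_le.1 (abs_sub_le_energySpan (E := E) u i a b)).2])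
  rw [sum_const, card_univ, nsmul_eq_mul] at hZ
  have hterm : Real.exp (-β * energySpan n E) / Fintype.card A ≤ Real.exp (-β * E v) / Z := by
    have hinv : Real.exp (-β * energySpan n E) = (Real.exp (β * energySpan n E))⁻¹ := by
      rw [← Real.exp_neg, neg_mul]
    calc Real.exp (-β * energySpan n E) / Fintype.card A
        = Real.exp (-β * E v) /
            (Fintype.card A * (Real.exp (-β * E v) * Real.exp (β * energySpan n E))) := by
          rw [hinv]
          field_simp
      _ ≤ Real.exp (-β * E v) / Z :=
          div_le_div_of_nonneg_left (Real.exp_pos _).le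
            (sum_pos (fun b _ => Real.exp_pos _) univ_nonempty) hZ
  have hsingle := single_le_sum (f := fun i' : Fin n => if ∀ j, j ≠ i' → v j = u j then
      Real.exp (-β * E v) / ∑ b, Real.exp (-β * E (Function.update u i' b)) else 0)
    (fun i' _ => by positivity) (mem_univ i)
  rw [if_pos fun j hj => Function.update_of_ne hj _ _] at hsingle
  rw [← div_div]
  exact div_le_div_of_nonneg_right (hterm.trans hsingle) n.cast_nonneg

/-- Changing the coordinates one at a time along `u = w₀, w₁, …, wₙ = v`, where `wₘ` agrees with
`v` below `m` and with `u` from `m` on. -/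
theorem le_pow_apply_of_le_update {M : Matrix (Fin n → A) (Fin n → A) ℝ}
    (hM : M ∈ rowStochastic ℝ (Fin n → A)) {θ : ℝ} (hθ : 0 ≤ θ)
    (h : ∀ u i a, θ ≤ M u (Function.update u i a)) (u v : Fin n → A) :
    θ ^ n ≤ (M ^ n) u v := by
  have key : ∀ m, m ≤ n → θ ^ m ≤ (M ^ m) u fun j => if (j : ℕ) < m then v j else u j := by
    intro m hm
    induction m with
    | zero => simp
    | succ m ih =>
      set w : Fin n → A := fun j => if (j : ℕ) < m then v j else u j
      have hnext : (fun j : Fin n => if (j : ℕ) < m + 1 then v j else u j)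
          = Function.update w ⟨m, hm⟩ (v ⟨m, hm⟩) := by
        ext j
        by_cases hj : j = ⟨m, hm⟩
        · subst hj; simp
        · have : (j : ℕ) ≠ m := fun h => hj (Fin.ext h)
          simp only [Function.update_of_ne hj, w]
          split_ifs <;> first | rfl | omega
      rw [hnext, pow_succ, pow_succ, mul_apply]
      calc θ ^ m * θ ≤ (M ^ m) u w * M w (Function.update w ⟨m, hm⟩ (v ⟨m, hm⟩)) :=
            mul_le_mul (ih (by omega)) (h _ _ _) hθ
              (nonneg_of_mem_rowStochastic (pow_mem hM m))
        _ ≤ _ := single_le_sum (f := fun x => (M ^ m) u x * M x _) (fun x _ => mul_nonneg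
              (nonneg_of_mem_rowStochastic (pow_mem hM m)) (nonneg_of_mem_rowStochastic hM))
            (mem_univ w)
  simpa using key n le_rfl

end Gibbs

section Schedule

variable {T₀ : ℝ}

noncomputable def logSchedule (T₀ : ℝ) (k : ℕ) : ℝ := Real.log ((k + 1 : ℕ) : ℝ) / T₀

theorem logSchedule_nonneg (hT₀ : 0 < T₀) (k : ℕ) : 0 ≤ logSchedule T₀ k :=
  div_nonneg (Real.log_nonneg (by simp)) hT₀.le

theorem logSchedule_le_succ (hT₀ : 0 < T₀) (k : ℕ) : logSchedule T₀ k ≤ logSchedule T₀ (k + 1) :=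
  div_le_div_of_nonneg_right (Real.log_le_log (by positivity) (by push_cast; linarith)) hT₀.le

theorem logSchedule_succ_sub_le (hT₀ : 0 < T₀) (k : ℕ) :
    logSchedule T₀ (k + 1) - logSchedule T₀ k ≤ ((k : ℝ) + 1)⁻¹ / T₀ := by
  have hk : (0 : ℝ) < (k : ℝ) + 1 := by positivity
  rw [logSchedule, logSchedule, ← sub_div, ← Real.log_div (by positivity) (by positivity)]
  refine div_le_div_of_nonneg_right ((Real.log_le_sub_one_of_pos (by positivity)).trans_eq ?_)
    hT₀.le
  push_cast
  field_simp
  ring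

theorem tendsto_logSchedule_atTop (hT₀ : 0 < T₀) : Tendsto (logSchedule T₀) atTop atTop :=
  (Real.tendsto_log_atTop.comp (tendsto_natCast_atTop_atTop.comp
    (tendsto_add_atTop_nat 1))).atTop_div_const hT₀

theorem exp_neg_logSchedule_mul (k : ℕ) (c : ℝ) :
    Real.exp (-logSchedule T₀ k * c) = ((k : ℝ) + 1) ^ (-(c / T₀)) := by
  rw [Real.rpow_def_of_pos (by positivity), logSchedule]
  push_cast
  ring_nf

theorem summable_nat_add_one_rpow_neg_iff {s : ℝ} :
    Summable (fun k : ℕ => ((k : ℝ) + 1) ^ (-s)) ↔ 1 < s := by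
  rw [← Real.summable_one_div_nat_add_rpow 1 s]
  refine summable_congr fun k => ?_
  rw [abs_of_pos (by positivity), Real.rpow_neg (by positivity), one_div]

/-- With `c ≤ T₀` the terms are at least `1 / (k + 1)`. -/
theorem not_summable_exp_neg_logSchedule_mul {c : ℝ} (hT₀ : 0 < T₀) (hc : c ≤ T₀) :
    ¬ Summable fun k => Real.exp (-logSchedule T₀ k * c) := by
  simp only [exp_neg_logSchedule_mul]
  rw [summable_nat_add_one_rpow_neg_iff, not_lt]
  exact (div_le_one hT₀).2 hc

theorem summable_exp_neg_logSchedule_mul_sub {g : ℝ} (hT₀ : 0 < T₀) (hg : 0 < g) :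
    Summable fun k => Real.exp (-logSchedule T₀ k * g) *
      (logSchedule T₀ (k + 1) - logSchedule T₀ k) := by
  have hsum : Summable fun k : ℕ => ((k : ℝ) + 1) ^ (-(1 + g / T₀)) / T₀ :=
    (summable_nat_add_one_rpow_neg_iff.2 (by linarith [div_pos hg hT₀])).div_const T₀
  refine hsum.of_nonneg_of_le
    (fun k => mul_nonneg (Real.exp_pos _).le (sub_nonneg.2 (logSchedule_le_succ hT₀ k)))
    fun k => ?_
  have hk : (0 : ℝ) < (k : ℝ) + 1 := by positivity
  calc Real.exp (-logSchedule T₀ k * g) * (logSchedule T₀ (k + 1) - logSchedule T₀ k)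
      ≤ ((k : ℝ) + 1) ^ (-(g / T₀)) * (((k : ℝ) + 1)⁻¹ / T₀) := by
        rw [exp_neg_logSchedule_mul]
        exact mul_le_mul_of_nonneg_left (logSchedule_succ_sub_le hT₀ k) (by positivity)
    _ = ((k : ℝ) + 1) ^ (-(1 + g / T₀)) / T₀ := by
        rw [neg_add, Real.rpow_add hk, Real.rpow_neg_one]
        ring

end Schedule

theorem exists_pos_forall_eq_zero_or_le {S : Type*} [Finite S] {f : S → ℝ} (hf : ∀ z, 0 ≤ f z) :
    ∃ g, 0 < g ∧ ∀ z, f z = 0 ∨ g ≤ f z := by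
  rcases isEmpty_or_nonempty {z // f z ≠ 0} with h | h
  · exact ⟨1, one_pos, fun z => .inl (not_not.1 fun hz => h.false ⟨z, hz⟩)⟩
  · obtain ⟨⟨z₀, hz₀⟩, hmin⟩ := Finite.exists_min fun z : {z // f z ≠ 0} => f z
    exact ⟨f z₀, lt_of_le_of_ne (hf z₀) (Ne.symm hz₀),
      fun z => or_iff_not_imp_left.2 fun hz => hmin ⟨z, hz⟩⟩

/-- The energy gap `g` above the minimum makes the total variation of `β ↦ boltzmann f β`
along the schedule a convergent series `∑ (k + 1)^(-1 - g/T₀)`. -/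
theorem summable_l1_boltzmann_logSchedule {S : Type*} [Fintype S] [Nonempty S] (f : S → ℝ)
    {T₀ : ℝ} (hT₀ : 0 < T₀) :
    Summable fun k =>
      l1 (boltzmann f (logSchedule T₀ k)) (boltzmann f (logSchedule T₀ (k + 1))) := by
  obtain ⟨y₀, hy₀⟩ := Finite.exists_min f
  have hf : ∀ z, 0 ≤ f z - f y₀ := fun z => sub_nonneg.2 (hy₀ z)
  obtain ⟨g, hg, hgap⟩ := exists_pos_forall_eq_zero_or_le hf
  obtain ⟨z₁, hz₁⟩ := Finite.exists_max fun z => f z - f y₀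
  simp only [← boltzmann_sub_const f (f y₀)]
  refine ((summable_exp_neg_logSchedule_mul_sub hT₀ hg).mul_left
    (Fintype.card S ^ 2 * (f z₁ - f y₀))).of_nonneg_of_le (fun k => l1_nonneg _ _) fun k => ?_
  exact (l1_boltzmann_le hg.le hgap hz₁ (sub_self (f y₀)) (logSchedule_nonneg hT₀ k)
    (logSchedule_le_succ hT₀ k)).trans_eq (mul_assoc _ _ _)

section Annealing

variable {A : Type*} [Fintype A] [DecidableEq A] {n : ℕ} {E : (Fin n → A) → ℝ} {T₀ : ℝ}

noncomputable def annealingChain (n : ℕ) (E : (Fin n → A) → ℝ) (T₀ : ℝ) (t : ℕ) :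
    Matrix (Fin n → A) (Fin n → A) ℝ :=
  gibbs n E (logSchedule T₀ (t / n))

theorem Pprod_annealingChain_eq_pow {k a b : ℕ} (ha : k * n ≤ a) (hb : b ≤ (k + 1) * n) :
    Pprod (annealingChain n E T₀) a b = gibbs n E (logSchedule T₀ k) ^ (b - a) :=
  Pprod_eq_pow _ fun t hat htb => by
    rw [annealingChain, Nat.div_eq_of_lt_le (ha.trans hat) (htb.trans_le hb)]

variable [Nonempty A]

theorem annealingChain_mem_rowStochastic (hn : 0 < n) (t : ℕ) :
    annealingChain n E T₀ t ∈ rowStochastic ℝ (Fin n → A) :=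
  gibbs_mem_rowStochastic hn _

theorem tendsto_l1_annealingChain_sweeps (hn : 0 < n) (hT₀ : n * energySpan n E < T₀)
    {μ₀ : (Fin n → A) → ℝ} (hμ₀ : IsDist μ₀) :
    Tendsto (fun k => l1 (μ₀ ᵥ* Pprod (annealingChain n E T₀) 0 (k * n))
      (boltzmann E (logSchedule T₀ k))) atTop (𝓝 0) := by
  have hT₀pos : 0 < T₀ := (mul_nonneg n.cast_nonneg energySpan_nonneg).trans_lt hT₀
  have hδ : ∀ k, (Real.exp (-logSchedule T₀ k * energySpan n E) / (Fintype.card A * n)) ^ n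
      = Real.exp (-logSchedule T₀ k * (n * energySpan n E)) / (Fintype.card A * n) ^ n :=
    fun k => by rw [div_pow, ← Real.exp_nat_mul]; ring_nf
  refine tendsto_l1_stationary_of_doeblin (Q := fun k => gibbs n E (logSchedule T₀ k) ^ n)
    (fun k => pow_mem (gibbs_mem_rowStochastic hn _) n) (fun k => by positivity)
    (fun k => le_pow_apply_of_le_update (gibbs_mem_rowStochastic hn _) (by positivity)
      (le_gibbs_update (logSchedule_nonneg hT₀pos k)))
    ?_ (fun k => boltzmann_isDist _ _)
    (fun k => vecMul_pow_eq_self (boltzmann_vecMul_gibbs hn _) n)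
    (summable_l1_boltzmann_logSchedule E hT₀pos) (by simpa [Pprod] using hμ₀) fun k => ?_
  · simp only [hδ]
    rw [summable_div_const_iff (by positivity)]
    exact not_summable_exp_neg_logSchedule_mul hT₀pos hT₀.le
  · rw [vecMul_vecMul, ← Pprod_mul _ (Nat.zero_le _) (Nat.mul_le_mul_right n k.le_succ),
      Pprod_annealingChain_eq_pow le_rfl le_rfl, add_one_mul, Nat.add_sub_cancel_left]

theorem l1_annealingChain_le (hn : 0 < n) {μ₀ : (Fin n → A) → ℝ} (hμ₀ : IsDist μ₀)
    (ν : (Fin n → A) → ℝ) (r : ℕ) :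
    l1 (μ₀ ᵥ* Pprod (annealingChain n E T₀) 0 r) ν
      ≤ l1 (μ₀ ᵥ* Pprod (annealingChain n E T₀) 0 (r / n * n))
          (boltzmann E (logSchedule T₀ (r / n)))
        + l1 (boltzmann E (logSchedule T₀ (r / n))) ν := by
  have hsweep : r / n * n ≤ r := Nat.div_mul_le_self r n
  have hG := gibbs_mem_rowStochastic (E := E) hn (logSchedule T₀ (r / n))
  refine (l1_triangle _ _ ν).trans (add_le_add_left ?_ _)
  have hr : r ≤ (r / n + 1) * n := (Nat.lt_div_mul_add hn).le.trans_eq (add_one_mul _ _).symm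
  rw [← Pprod_mul _ (Nat.zero_le _) hsweep, Pprod_annealingChain_eq_pow le_rfl hr,
    ← vecMul_vecMul]
  nth_rewrite 1 [← vecMul_pow_eq_self (boltzmann_vecMul_gibbs hn _) (r - r / n * n)]
  refine l1_vecMul_le_l1 (pow_mem hG _) ?_
  rw [(hμ₀.vecMul (Pprod_mem_rowStochastic _ (annealingChain_mem_rowStochastic hn) 0 _)).2,
    (boltzmann_isDist _ _).2]

end Annealing

theorem gibbs_annealing_convergence_general {A : Type*} [Fintype A] [DecidableEq A] [Nonempty A]
    (n : ℕ) (hn : 0 < n) (E : (Fin n → A) → ℝ)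
    (T₀ : ℝ) (hT₀ : (n : ℝ) * energySpan n E < T₀)
    (μ₀ : (Fin n → A) → ℝ) (hμ₀ : IsDist μ₀) :
    Tendsto (fun r =>
        l1 (Matrix.vecMul μ₀
              (Pprod (fun t => gibbs n E (Real.log ((t / n + 1 : ℕ) : ℝ) / T₀)) 0 r))
           (uniformOnMinimizers n E))
      atTop (nhds 0) ∧
    Tendsto (fun r => ∑ y ∈ minimizers n E,
        Matrix.vecMul μ₀
          (Pprod (fun t => gibbs n E (Real.log ((t / n + 1 : ℕ) : ℝ) / T₀)) 0 r) y)
      atTop (nhds 1) := by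
  have hT₀pos : 0 < T₀ := (mul_nonneg n.cast_nonneg energySpan_nonneg).trans_lt hT₀
  have hsweeps := Nat.tendsto_div_const_atTop hn.ne'
  have hl1 : Tendsto (fun r => l1 (μ₀ ᵥ* Pprod (annealingChain n E T₀) 0 r)
      (uniformOnMinimizers n E)) atTop (𝓝 0) := by
    refine squeeze_zero (fun r => l1_nonneg _ _) (l1_annealingChain_le hn hμ₀ _) ?_
    have hsum := ((tendsto_l1_annealingChain_sweeps hn hT₀ hμ₀).comp hsweeps).add
      ((tendsto_l1_of_tendsto (tendsto_boltzmann_atTop E)).comp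
        ((tendsto_logSchedule_atTop hT₀pos).comp hsweeps))
    rw [add_zero] at hsum
    exact hsum
  obtain ⟨y₀, hy₀⟩ := Finite.exists_min E
  have hH : (minimizers n E).Nonempty := ⟨y₀, by simpa [minimizers] using hy₀⟩
  refine ⟨hl1, tendsto_sub_nhds_zero_iff.1 (squeeze_zero_norm (fun r => ?_) hl1)⟩
  rw [Real.norm_eq_abs, ← sum_uniformOn hH]
  exact abs_sum_sub_sum_le_l1 _ _ _

/-- Convergence of simulated annealing with the Gibbs sampler: with the cooling
schedule `β_t = ln(⌊t/n⌋ + 1)/T₀`, `T₀ > nΔ`, the distribution after `r` steps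
converges in ℓ¹ to the uniform distribution on the set of energy minimizers;
in particular the probability of the set of minimizers tends to `1`. -/
theorem gibbs_annealing_convergence {A : Type*} [Fintype A] [DecidableEq A] [Nonempty A]
    (n : ℕ) (hn : 0 < n) (E : (Fin n → A) → ℝ) (hΔ : 0 < energySpan n E)
    (T₀ : ℝ) (hT₀ : (n : ℝ) * energySpan n E < T₀)
    (μ₀ : (Fin n → A) → ℝ) (hμ₀ : IsDist μ₀) :
    Tendsto (fun r =>
        l1 (Matrix.vecMul μ₀
              (Pprod (fun t => gibbs n E (Real.log ((t / n + 1 : ℕ) : ℝ) / T₀)) 0 r))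
           (uniformOnMinimizers n E))
      atTop (nhds 0) ∧
    Tendsto (fun r => ∑ y ∈ minimizers n E,
        Matrix.vecMul μ₀
          (Pprod (fun t => gibbs n E (Real.log ((t / n + 1 : ℕ) : ℝ) / T₀)) 0 r) y)
      atTop (nhds 1) :=
  gibbs_annealing_convergence_general n hn E T₀ hT₀ μ₀ hμ₀
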